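/- arXiv:2301.12610 — 2 statements merged into one kernel-verified Lean document; each statement's English description precedes it below -/
import Mathlib

section
/- The real slice of the Mandelbrot set is the interval [−2, 1/4]: a real number c has the property that the forward orbit of 0 under f_c(z) = z² + c is bounded if and only if −2 ≤ c ≤ 1/4, i.e. M ∩ ℝ = [−2, 1/4]. -/
/-- The complex iterates with real parameter `c` are the coercions of real iterates. -/
lemma mandelbrot_iter_real (c : ℝ) (n : ℕ) :
    (fun z : ℂ => z ^ 2 + (c : ℂ))^[n] 0 = (((fun x : ℝ => x ^ 2 + c)^[n] 0 : ℝ) : ℂ) := by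
  induction n with
  | zero => simp
  | succ n ih =>
    rw [Function.iterate_succ_apply', Function.iterate_succ_apply', ih]
    push_cast
    ring

lemma mandelbrot_escape_low {c : ℝ} (hc : c < -2) (n : ℕ) :
    2 + (n + 1) * (-c - 2) ≤ |(fun x : ℝ => x ^ 2 + c)^[n + 1] 0| := by
  set ε := -c - 2 with hε
  have hε0 : 0 < ε := by simp [hε]; linarith
  induction n with
  | zero =>
    have h : (fun x : ℝ => x ^ 2 + c)^[0 + 1] 0 = c := by simp
    rw [h, abs_of_nonpos (by linarith)]
    push_cast
    simp [hε]
  | succ n ih =>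
    rw [Function.iterate_succ_apply']
    set a := (fun x : ℝ => x ^ 2 + c)^[n + 1] 0 with ha
    have h1 : 2 + (n + 1) * ε ≤ |a| := ih
    have h2 : (2 + (n + 1) * ε) ^ 2 ≤ a ^ 2 := by
      rw [← sq_abs a]
      have : 0 ≤ 2 + (n + 1) * ε := by positivity
      nlinarith [abs_nonneg a]
    have hn0 : (0 : ℝ) ≤ (n : ℝ) * ε := mul_nonneg (Nat.cast_nonneg n) hε0.le
    have hnn : 0 ≤ a ^ 2 + c := by nlinarith [h2, hn0, hε0, sq_nonneg ε, sq_nonneg ((n : ℝ) * ε)]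
    rw [abs_of_nonneg hnn]
    have hcε : c = -2 - ε := by rw [hε]; ring
    push_cast
    nlinarith [h2, hn0, hε0, sq_nonneg ε, sq_nonneg ((n : ℝ) * ε), sq_nonneg (((n : ℝ) + 1) * ε)]

lemma mandelbrot_escape_high {c : ℝ} (_hc : 1 / 4 < c) (n : ℕ) :
    n * (c - 1 / 4) ≤ (fun x : ℝ => x ^ 2 + c)^[n] 0 := by
  induction n with
  | zero => simp
  | succ n ih =>
    rw [Function.iterate_succ_apply']
    set a := (fun x : ℝ => x ^ 2 + c)^[n] 0 with ha
    have : a ^ 2 + c - a = (a - 1 / 2) ^ 2 + (c - 1 / 4) := by ring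
    push_cast
    nlinarith [sq_nonneg (a - 1 / 2)]

lemma mandelbrot_bounded {c : ℝ} (h1 : -2 ≤ c) (h2 : c ≤ 1 / 4) (n : ℕ) :
    |(fun x : ℝ => x ^ 2 + c)^[n] 0| ≤ (1 + Real.sqrt (1 - 4 * c)) / 2 := by
  set s := Real.sqrt (1 - 4 * c) with hs
  have hs0 : 0 ≤ s := Real.sqrt_nonneg _
  have hs2 : s ^ 2 = 1 - 4 * c := Real.sq_sqrt (by linarith)
  induction n with
  | zero => simp; positivity
  | succ n ih =>
    rw [Function.iterate_succ_apply']
    set a := (fun x : ℝ => x ^ 2 + c)^[n] 0 with ha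
    rw [abs_le] at ih ⊢
    constructor
    · -- lower bound: a^2 + c ≥ c ≥ -(1+s)/2
      have hq : -(1 + s) / 2 ≤ c := by nlinarith [sq_nonneg (s + 1 + 2 * c), sq_nonneg (s - 1 - 2 * c)]
      nlinarith [sq_nonneg a]
    · have : a ^ 2 ≤ ((1 + s) / 2) ^ 2 := by nlinarith [ih.1, ih.2]
      nlinarith

/-- The real slice of the Mandelbrot set is `[−2, 1/4]`: for a real parameter `c`,
the forward orbit of `0` under `f_c(z) = z² + c` is bounded iff `−2 ≤ c ≤ 1/4`. -/
theorem mandelbrot_real_slice :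
    {c : ℝ | Bornology.IsBounded
        (Set.range fun n => (fun z : ℂ => z ^ 2 + (c : ℂ))^[n] 0)} =
      Set.Icc (-2 : ℝ) (1 / 4) := by
  ext c
  simp only [Set.mem_setOf_eq, Set.mem_Icc]
  rw [isBounded_iff_forall_norm_le]
  simp only [Set.forall_mem_range, mandelbrot_iter_real, Complex.norm_real, Real.norm_eq_abs]
  constructor
  · rintro ⟨C, hC⟩
    constructor
    · by_contra h
      push_neg at h
      obtain ⟨n, hn⟩ := exists_nat_gt ((C - 2) / (-c - 2))
      have hε : 0 < -c - 2 := by linarith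
      have := mandelbrot_escape_low h n
      have hCn : C < 2 + (n + 1) * (-c - 2) := by
        rw [div_lt_iff₀ hε] at hn
        nlinarith [hε]
      exact absurd (hC (n + 1)) (by push_neg; linarith)
    · by_contra h
      push_neg at h
      obtain ⟨n, hn⟩ := exists_nat_gt (C / (c - 1 / 4))
      have hε : 0 < c - 1 / 4 := by linarith
      have h1 := mandelbrot_escape_high h n
      have hCn : C < n * (c - 1 / 4) := by rwa [div_lt_iff₀ hε] at hn
      have := le_abs_self ((fun x : ℝ => x ^ 2 + c)^[n] 0)
      exact absurd (hC n) (by push_neg; linarith)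
  · rintro ⟨h1, h2⟩
    exact ⟨(1 + Real.sqrt (1 - 4 * c)) / 2, mandelbrot_bounded h1 h2⟩
end

section
/- Let d ≥ 2 and let σ_d(w) = w^d on the unit circle S¹ with normalized Haar measure μ. Suppose X ⊆ S¹ is a compact set with μ(X) > 0 and there exist integers n ≥ 0 and k ≥ 1 such that σ_d^n(X) = σ_d^{n+k}(X). Then the set Y = σ_d^n(X) ∪ σ_d^{n+1}(X) ∪ ⋯ ∪ σ_d^{n+k−1}(X) has full measure: μ(S¹ \ Y) = 0. -/
open MeasureTheory

/-- The normalized Haar (Lebesgue) measure on the unit circle `S¹ ⊂ ℂ`, obtained as the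
pushforward of the normalized measure on `ℝ/ℤ` under `x ↦ exp(2πix)`. -/
noncomputable def circleHaar : Measure ℂ :=
  Measure.map (fun x : AddCircle (1 : ℝ) => (AddCircle.toCircle x : ℂ)) volume

/-- Let `σ_d(w) = w^d` on the unit circle with normalized Haar measure `μ`. If `X ⊆ S¹`
is compact with `μ(X) > 0` and `σ_d^n(X) = σ_d^{n+k}(X)` for some `n ≥ 0`, `k ≥ 1`, then
`Y = σ_d^n(X) ∪ ⋯ ∪ σ_d^{n+k−1}(X)` has full measure: `μ(S¹ \ Y) = 0`. -/
theorem full_measure_of_periodic_image (d : ℕ) (hd : 2 ≤ d)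
    (X : Set ℂ) (hXS : X ⊆ Metric.sphere (0 : ℂ) 1) (hXc : IsCompact X)
    (hpos : 0 < circleHaar X) (n k : ℕ) (hk : 1 ≤ k)
    (hper : (fun w : ℂ => w ^ d)^[n] '' X = (fun w : ℂ => w ^ d)^[n + k] '' X) :
    circleHaar (Metric.sphere (0 : ℂ) 1 \
      ⋃ i ∈ Finset.range k, (fun w : ℂ => w ^ d)^[n + i] '' X) = 0 := by
  haveI : Fact ((0:ℝ) < 1) := ⟨one_pos⟩
  have hpow : ∀ (m : ℕ) (x : AddCircle (1:ℝ)),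
      AddCircle.toCircle (m • x) = (AddCircle.toCircle x) ^ m := by
    intro m x
    induction m with
    | zero => simp
    | succ j ih => rw [succ_nsmul, AddCircle.toCircle_add, ih, pow_succ]
  set σ : ℂ → ℂ := fun w => w ^ d with hσ
  set e : AddCircle (1:ℝ) → ℂ := fun x => (AddCircle.toCircle x : ℂ) with he
  have hecont : Continuous e :=
    continuous_subtype_val.comp AddCircle.continuous_toCircle
  have hσcont : Continuous σ := continuous_pow d
  have hσitcont : ∀ m : ℕ, Continuous (σ^[m]) := fun m => hσcont.iterate m
  set T : AddCircle (1:ℝ) → AddCircle (1:ℝ) := fun x => d • x with hT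
  have hcomm : ∀ x, e (T x) = σ (e x) := by
    intro x
    simp only [he, hT, hσ, hpow d x]
    exact map_pow Circle.coeHom _ d
  have hit : ∀ (m : ℕ) (x), e (T^[m] x) = σ^[m] (e x) := by
    intro m
    induction m with
    | zero => simp
    | succ m ih =>
      intro x
      rw [Function.iterate_succ_apply', Function.iterate_succ_apply', hcomm, ih]
  -- the map formula for circleHaar
  have hmap : ∀ s : Set ℂ, MeasurableSet s → circleHaar s = volume (e ⁻¹' s) := by
    intro s hs
    rw [circleHaar, Measure.map_apply hecont.measurable hs]
  set Z : Set ℂ := σ^[n] '' X with hZ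
  have hZc : IsCompact Z := hXc.image (hσitcont n)
  have hZk : σ^[k] '' Z = Z := by
    rw [hZ, ← Set.image_comp, ← Function.iterate_add, add_comm k n, ← hper]
  set Y : Set ℂ := ⋃ i ∈ Finset.range k, σ^[n + i] '' X with hY
  have hYalt : ∀ i, σ^[n + i] '' X = σ^[i] '' Z := by
    intro i
    rw [hZ, ← Set.image_comp, ← Function.iterate_add, add_comm i n]
  have hmemY : ∀ {w : ℂ} {i : ℕ}, i < k → w ∈ σ^[i] '' Z → w ∈ Y := by
    intro w i hi hw
    rw [hY]
    simp only [Set.mem_iUnion, Finset.mem_range]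
    exact ⟨i, hi, by rwa [hYalt i]⟩
  have hYc : IsCompact Y := by
    apply (Finset.range k).isCompact_biUnion
    intro i _
    exact hXc.image (hσitcont (n + i))
  have hYm : MeasurableSet Y := hYc.isClosed.measurableSet
  -- Y ⊆ σ ⁻¹' Y
  have hYsub : Y ⊆ σ ⁻¹' Y := by
    intro y hy
    rw [hY] at hy
    simp only [Set.mem_iUnion, Finset.mem_range] at hy
    obtain ⟨i, hi, hyi⟩ := hy
    rw [hYalt i] at hyi
    obtain ⟨z, hz, rfl⟩ := hyi
    have hstep : σ (σ^[i] z) ∈ σ^[i + 1] '' Z :=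
      ⟨z, hz, Function.iterate_succ_apply' σ i z⟩
    rcases eq_or_lt_of_le (Nat.succ_le_of_lt hi) with hik | hik
    · have : σ (σ^[i] z) ∈ Z := by rw [← hZk, ← hik]; exact hstep
      exact hmemY hk (by simpa using this)
    · exact hmemY hik hstep
  set B : Set (AddCircle (1:ℝ)) := e ⁻¹' Y with hB
  have hBm : MeasurableSet B := hecont.measurable hYm
  have hBsub : B ⊆ T ⁻¹' B := by
    intro x hx
    have := hYsub hx
    simp only [hB, Set.mem_preimage, hcomm]
    exact this
  have herg : Ergodic T := AddCircle.ergodic_nsmul (by omega : 1 < d)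
  -- B has positive measure
  have hZY : Z ⊆ Y := fun z hz => hmemY hk (by simpa using hz)
  have hposB : 0 < volume B := by
    have h1 : circleHaar X = volume (e ⁻¹' X) :=
      hmap X hXc.isClosed.measurableSet
    have h2 : e ⁻¹' X ⊆ T^[n] ⁻¹' (e ⁻¹' Z) := by
      intro x hx
      simp only [Set.mem_preimage, hit]
      exact ⟨e x, hx, rfl⟩
    have h3 : volume (T^[n] ⁻¹' (e ⁻¹' Z)) = volume (e ⁻¹' Z) :=
      (herg.toMeasurePreserving.iterate n).measure_preimage
        (hecont.measurable hZc.isClosed.measurableSet).nullMeasurableSet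
    calc 0 < circleHaar X := hpos
      _ = volume (e ⁻¹' X) := h1
      _ ≤ volume (T^[n] ⁻¹' (e ⁻¹' Z)) := measure_mono h2
      _ = volume (e ⁻¹' Z) := h3
      _ ≤ volume B := measure_mono (Set.preimage_mono hZY)
  -- ergodicity: B is a.e. univ
  have hae : B =ᵐ[volume] (Set.univ : Set (AddCircle (1:ℝ))) := by
    rcases herg.ae_empty_or_univ_of_ae_le_preimage hBm.nullMeasurableSet
        hBsub.eventuallyLE with h | h
    · rw [ae_eq_empty] at h
      exact absurd h hposB.ne'
    · exact h
  have hBc : volume Bᶜ = 0 := by rwa [ae_eq_univ] at hae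
  -- conclude
  have hdm : MeasurableSet (Metric.sphere (0 : ℂ) 1 \ Y) :=
    (Metric.isClosed_sphere.measurableSet).diff hYm
  rw [hmap _ hdm]
  refine le_antisymm ?_ zero_le
  rw [← hBc]
  apply measure_mono
  intro x hx
  exact fun h => hx.2 h
end
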